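/- Let B be an integral domain, R ⊆ B a subring, f ∈ R a nonzero element, and μ ≥ 1 an integer such that B is generated as a ring by R together with the set {b ∈ B : f^μ·b ∈ R}. If R ∩ fB = fR, then R ∩ f^j B = f^j R for every j ≥ 1, and R = B. -/
import Mathlib


/-- Let `B` be an integral domain, `R ⊆ B` a subring, `f ∈ R` nonzero,
and `μ ≥ 1` such that `B` is generated as a ring by `R` together with
`{b ∈ B : f^μ·b ∈ R}` (i.e. `B` is the affine modification `R[f^{-μ}(R ∩ f^μ B)]`).
If `R ∩ fB = fR`, then `R ∩ f^j B = f^j R` for all `j ≥ 1` and `R = B`. -/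
theorem stmt7
    (B : Type) [CommRing B] [IsDomain B]
    (R : Subring B) (f : B) (hfR : f ∈ R) (hf0 : f ≠ 0)
    (μ : ℕ) (hμ : 1 ≤ μ)
    (hgen : Subring.closure ((R : Set B) ∪ {b : B | f ^ μ * b ∈ R}) = ⊤)
    (hmod : (R : Set B) ∩ (Ideal.span {f} : Ideal B) = (f * ·) '' (R : Set B)) :
    (∀ j : ℕ, 1 ≤ j →
        (R : Set B) ∩ (Ideal.span {f ^ j} : Ideal B) = (f ^ j * ·) '' (R : Set B)) ∧
      R = ⊤ := by
  have key : ∀ j : ℕ,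
      (R : Set B) ∩ (Ideal.span {f ^ j} : Ideal B) = (f ^ j * ·) '' (R : Set B) := by
    intro j
    induction j with
    | zero =>
      ext x
      simp [Ideal.mem_span_singleton]
    | succ j ih =>
      ext x
      constructor
      · rintro ⟨hxR, hxI⟩
        rw [SetLike.mem_coe, Ideal.mem_span_singleton] at hxI
        obtain ⟨b, hb⟩ := hxI
        have hx1 : x ∈ (R : Set B) ∩ (Ideal.span {f} : Ideal B) := by
          refine ⟨hxR, ?_⟩
          rw [SetLike.mem_coe, Ideal.mem_span_singleton]
          exact ⟨f ^ j * b, by rw [hb]; ring⟩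
        rw [hmod] at hx1
        obtain ⟨r, hrR, hrx⟩ := hx1
        have hr : r = f ^ j * b := by
          simp only at hrx
          have : f * r = f * (f ^ j * b) := by
            rw [hrx, hb]; ring
          exact mul_left_cancel₀ hf0 this
        have hr2 : r ∈ (R : Set B) ∩ (Ideal.span {f ^ j} : Ideal B) := by
          refine ⟨hrR, ?_⟩
          rw [SetLike.mem_coe, Ideal.mem_span_singleton]
          exact ⟨b, hr⟩
        rw [ih] at hr2
        obtain ⟨s, hsR, hsr⟩ := hr2
        exact ⟨s, hsR, by simp only at hsr ⊢; rw [← hrx, ← hsr]; ring⟩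
      · rintro ⟨s, hsR, hsx⟩
        simp only at hsx
        subst hsx
        refine ⟨R.mul_mem (R.pow_mem hfR _) hsR, ?_⟩
        rw [SetLike.mem_coe, Ideal.mem_span_singleton]
        exact ⟨s, rfl⟩
  refine ⟨fun j _ => key j, ?_⟩
  have hsub : ((R : Set B) ∪ {b : B | f ^ μ * b ∈ R}) ⊆ (R : Set B) := by
    rintro b (hb | hb)
    · exact hb
    · have : f ^ μ * b ∈ (R : Set B) ∩ (Ideal.span {f ^ μ} : Ideal B) := by
        refine ⟨hb, ?_⟩
        rw [SetLike.mem_coe, Ideal.mem_span_singleton]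
        exact ⟨b, rfl⟩
      rw [key μ] at this
      obtain ⟨s, hsR, hsb⟩ := this
      simp only at hsb
      have hbs : s = b := mul_left_cancel₀ (pow_ne_zero μ hf0) hsb
      rwa [← hbs]
  have := Subring.closure_le.mpr hsub
  rw [hgen] at this
  exact top_le_iff.mp this
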